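/- Let X = (X, ρ) be a compact metric space, T : X → X a 1-Lipschitz homeomorphism, and μ a T-invariant ergodic Borel probability measure. Let (r_k) be a non-increasing sequence of positive reals with r_k → 0, and let B_k(x) be the open ball of radius r_k around x. Then for μ-almost every x ∈ X, (1/μ(B_k(x))) ∫_{B_k(x)} (1/k)∑_{i=0}^{k-1} f∘T^i dμ → ∫ f dμ as k → ∞ for all f ∈ C(X). -/

import Mathlib

/-!
For a 1-Lipschitz map `T` the Birkhoff averages `Aₙ f` of a continuous `f` form a bounded,
uniformly equicontinuous family, hence are relatively compact in `C(X)` by Arzelà–Ascoli.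
A limit `G` of `A_{n_j} f` with `n_j → ∞` is `T`-invariant, so by ergodicity it is a.e. equal to
a constant, which dominated convergence identifies as `∫ f dμ`; being continuous, `G` equals that
constant on all of `supp μ`. Hence `Aₙ f x → ∫ f dμ` for every `x` in the support, a set of full
measure, and equicontinuity at `x` passes this limit on to the averages over the shrinking balls.
-/

open MeasureTheory Filter Finset Topology BoundedContinuousFunction

section Birkhoff

variable {α E : Type*} [NormedAddCommGroup E] {f : α → α} {g : α → E}

theorem norm_birkhoffAverage_le (𝕜 : Type*) [RCLike 𝕜] [NormedSpace 𝕜 E] {C : ℝ}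
    (hg : ∀ y, ‖g y‖ ≤ C) (n : ℕ) (x : α) : ‖birkhoffAverage 𝕜 f g n x‖ ≤ C := by
  rcases eq_or_ne n 0 with rfl | hn
  · simpa using (norm_nonneg _).trans (hg x)
  calc ‖birkhoffAverage 𝕜 f g n x‖ ≤ (n : ℝ)⁻¹ * ∑ k ∈ range n, ‖g (f^[k] x)‖ := by
        rw [birkhoffAverage, birkhoffSum, norm_smul, norm_inv, RCLike.norm_natCast]
        gcongr
        exact norm_sum_le _ _
    _ ≤ (n : ℝ)⁻¹ * ∑ _k ∈ range n, C := by gcongr; exact hg _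
    _ = C := by simp [hn]

theorem comp_eq_of_tendsto_birkhoffAverage (𝕜 : Type*) [RCLike 𝕜] [NormedSpace 𝕜 E]
    (hg : Bornology.IsBounded (Set.range g)) {ns : ℕ → ℕ}
    (hns : Tendsto ns atTop atTop) {G : α → E}
    (hG : ∀ y, Tendsto (fun j => birkhoffAverage 𝕜 f g (ns j) y) atTop (𝓝 (G y))) :
    G ∘ f = G := by
  funext y
  exact sub_eq_zero.1 <| tendsto_nhds_unique ((hG (f y)).sub (hG y))
    ((tendsto_birkhoffAverage_apply_sub_birkhoffAverage' 𝕜 hg f y).comp hns)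

variable [NormedSpace ℝ E] [MeasurableSpace α] {μ : Measure α}

theorem MeasureTheory.MeasurePreserving.integrable_birkhoffAverage (hf : MeasurePreserving f μ μ)
    (hg : Integrable g μ) (n : ℕ) : Integrable (birkhoffAverage ℝ f g n) μ :=
  (integrable_finsetSum _ fun k _ => (hf.iterate k).integrable_comp_of_integrable hg).smul _

theorem MeasureTheory.MeasurePreserving.integral_birkhoffAverage (hf : MeasurePreserving f μ μ)
    (hg : Integrable g μ) {n : ℕ} (hn : n ≠ 0) :
    ∫ x, birkhoffAverage ℝ f g n x ∂μ = ∫ x, g x ∂μ := by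
  have hcomp (k : ℕ) : ∫ x, g (f^[k] x) ∂μ = ∫ x, g x ∂μ := by
    have hmap : Measure.map f^[k] μ = μ := (hf.iterate k).map_eq
    rw [← integral_map (hf.iterate k).aemeasurable (hmap.symm ▸ hg.aestronglyMeasurable), hmap]
  have hint (k : ℕ) : Integrable (fun x => g (f^[k] x)) μ :=
    (hf.iterate k).integrable_comp_of_integrable hg
  simp only [birkhoffAverage, birkhoffSum]
  rw [integral_smul, integral_finsetSum _ fun k _ => hint k,
    Finset.sum_congr rfl fun k _ => hcomp k, sum_const, card_range, ← Nat.cast_smul_eq_nsmul ℝ,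
    smul_smul, inv_mul_cancel₀ (Nat.cast_ne_zero.2 hn), one_smul]

theorem MeasureTheory.MeasurePreserving.integral_eq_of_tendsto_birkhoffAverage
    [IsFiniteMeasure μ] (hf : MeasurePreserving f μ μ) (hg : Integrable g μ) {C : ℝ}
    (hC : ∀ y, ‖g y‖ ≤ C) {ns : ℕ → ℕ} (hns : Tendsto ns atTop atTop) {G : α → E}
    (hG : ∀ y, Tendsto (fun j => birkhoffAverage ℝ f g (ns j) y) atTop (𝓝 (G y))) :
    ∫ y, G y ∂μ = ∫ y, g y ∂μ := by
  have hlim := tendsto_integral_of_dominated_convergence (fun _ => C)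
    (fun j => (hf.integrable_birkhoffAverage hg (ns j)).aestronglyMeasurable) (integrable_const C)
    (fun j => ae_of_all _ (norm_birkhoffAverage_le ℝ hC (ns j))) (ae_of_all _ hG)
  refine tendsto_nhds_unique hlim (tendsto_const_nhds.congr' ?_)
  filter_upwards [hns.eventually_ne_atTop 0] with j hj
  exact (hf.integral_birkhoffAverage hg hj).symm

end Birkhoff

theorem Continuous.eqOn_support_of_ae_eq {X Y : Type*} [TopologicalSpace X] [MeasurableSpace X]
    [TopologicalSpace Y] [T2Space Y] {μ : Measure X} {g g' : X → Y} (hg : Continuous g)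
    (hg' : Continuous g') (h : g =ᵐ[μ] g') : Set.EqOn g g' μ.support := fun x hx => by
  by_contra hne
  exact Measure.subset_compl_support_of_isOpen (isOpen_ne_fun hg hg') (ae_iff.1 h) hne hx

theorem Ergodic.eqOn_support_of_tendsto_birkhoffAverage {X E : Type*} [TopologicalSpace X]
    [MeasurableSpace X] [NormedAddCommGroup E] [NormedSpace ℝ E] [CompleteSpace E] {μ : Measure X}
    [IsProbabilityMeasure μ] {f : X → X} (hf : Ergodic f μ) {g : X → E} (hg : Integrable g μ)
    {C : ℝ} (hC : ∀ y, ‖g y‖ ≤ C) {ns : ℕ → ℕ} (hns : Tendsto ns atTop atTop) {G : X → E}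
    (hGc : Continuous G)
    (hG : ∀ y, Tendsto (fun j => birkhoffAverage ℝ f g (ns j) y) atTop (𝓝 (G y))) :
    Set.EqOn G (fun _ => ∫ y, g y ∂μ) μ.support := by
  have hinv : G ∘ f = G :=
    comp_eq_of_tendsto_birkhoffAverage ℝ (isBounded_iff_forall_norm_le.2 ⟨C, by simpa⟩) hns hG
  have hGm : AEStronglyMeasurable G μ := aestronglyMeasurable_of_tendsto_ae atTop
    (fun j => (hf.integrable_birkhoffAverage hg (ns j)).aestronglyMeasurable) (ae_of_all _ hG)
  obtain ⟨c, hc⟩ := hf.ae_eq_const_of_ae_eq_comp_ae hGm (by rw [hinv])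
  have hcg : c = ∫ y, g y ∂μ := by
    rw [← hf.integral_eq_of_tendsto_birkhoffAverage hg hC hns hG, integral_congr_ae hc]
    simp
  exact hcg ▸ hGc.eqOn_support_of_ae_eq continuous_const hc

theorem tendsto_birkhoffAverage_of_mem_support {X : Type*} [PseudoMetricSpace X] [CompactSpace X]
    [MeasurableSpace X] [OpensMeasurableSpace X] {μ : Measure X} [IsProbabilityMeasure μ]
    {f : X → X} (hlip : LipschitzWith 1 f) (hf : Ergodic f μ) (g : C(X, ℝ)) {x : X}
    (hx : x ∈ μ.support) :
    Tendsto (birkhoffAverage ℝ f g · x) atTop (𝓝 (∫ y, g y ∂μ)) := by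
  have hequi := (uniformEquicontinuous_birkhoffAverage ℝ hlip
    (CompactSpace.uniformContinuous_of_continuous g.continuous)).equicontinuous
  let F (n : ℕ) : X →ᵇ ℝ := .mkOfCompact ⟨birkhoffAverage ℝ f g n, hequi.continuous n⟩
  have hcompact : IsCompact (closure (Set.range F)) := by
    refine BoundedContinuousFunction.arzela_ascoli (Metric.closedBall 0 ‖g‖)
      (isCompact_closedBall _ _) _ ?_ ?_
    · rintro _ y ⟨n, rfl⟩
      exact mem_closedBall_zero_iff.2 (norm_birkhoffAverage_le ℝ g.norm_coe_le_norm n y)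
    · convert hequi.comp (Set.rangeSplitting F) using 1
      funext F'
      rw [← Set.apply_rangeSplitting F F']
      rfl
  refine tendsto_of_subseq_tendsto fun ns hns => ?_
  obtain ⟨G, -, φ, hφ, hFG⟩ :=
    hcompact.isSeqCompact fun n => subset_closure (Set.mem_range_self (ns n))
  have hG (y : X) : Tendsto (fun j => birkhoffAverage ℝ f g (ns (φ j)) y) atTop (𝓝 (G y)) :=
    ((continuous_eval_const y).tendsto G).comp hFG
  have hGx : G x = ∫ y, g y ∂μ := hf.eqOn_support_of_tendsto_birkhoffAverage
    (g.continuous.integrable_of_hasCompactSupport (.of_compactSpace _)) g.norm_coe_le_norm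
    (hns.comp hφ.tendsto_atTop) G.continuous hG hx
  exact ⟨φ, hGx ▸ hG x⟩

theorem tendsto_setAverage_ball_of_equicontinuousAt {ι X E : Type*} [PseudoMetricSpace X]
    [MeasurableSpace X] [OpensMeasurableSpace X] [NormedAddCommGroup E] [NormedSpace ℝ E]
    [CompleteSpace E] {μ : Measure X} [IsFiniteMeasure μ] {l : Filter ι} {F : ι → X → E}
    {x : X} {L : E} {r : ι → ℝ} (hF : EquicontinuousAt F x) (hFx : Tendsto (F · x) l (𝓝 L))
    (hFi : ∀ i, IntegrableOn (F i) (Metric.ball x (r i)) μ)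
    (hμ : ∀ i, μ (Metric.ball x (r i)) ≠ 0) (hr : Tendsto r l (𝓝 0)) :
    Tendsto (fun i => ⨍ y in Metric.ball x (r i), F i y ∂μ) l (𝓝 L) := by
  refine Metric.nhds_basis_closedBall.tendsto_right_iff.2 fun ε hε => ?_
  obtain ⟨δ, hδ, hFδ⟩ := Metric.equicontinuousAt_iff.1 hF (ε / 2) (half_pos hε)
  filter_upwards [hr.eventually (gt_mem_nhds hδ),
    hFx.eventually (Metric.ball_mem_nhds L (half_pos hε))] with i hrδ hFxL
  refine (convex_closedBall L ε).set_average_mem Metric.isClosed_closedBall (hμ i)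
    (measure_ne_top μ _) (ae_restrict_of_forall_mem measurableSet_ball fun y hy => ?_) (hFi i)
  have hyx : dist y x < δ := (Metric.mem_ball.1 hy).trans hrδ
  calc dist (F i y) L ≤ dist (F i x) (F i y) + dist (F i x) L := dist_triangle_left _ _ _
    _ ≤ ε / 2 + ε / 2 := add_le_add (hFδ y hyx i).le (Metric.mem_ball.1 hFxL).le
    _ = ε := add_halves ε

theorem nonexpansive_random_balls_general
    {X : Type*} [MetricSpace X] [CompactSpace X] [MeasurableSpace X] [BorelSpace X]
    (μ : Measure X) [IsProbabilityMeasure μ]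
    (T : X ≃ₜ X) (hLip : ∀ x y : X, dist (T x) (T y) ≤ dist x y)
    (hErg : Ergodic (⇑T) μ)
    (r : ℕ → ℝ) (hrpos : ∀ k, 0 < r k)
    (hr0 : Tendsto r atTop (𝓝 0)) :
    ∀ᵐ x ∂μ, ∀ f : C(X, ℝ),
      Tendsto (fun k : ℕ => (μ (Metric.ball x (r k))).toReal⁻¹ *
          ∫ y in Metric.ball x (r k), (k : ℝ)⁻¹ * ∑ i ∈ range k, f ((⇑T)^[i] y) ∂μ)
        atTop (𝓝 (∫ y, f y ∂μ)) := by
  have hT : LipschitzWith 1 T := .of_dist_le_mul fun x y => by simpa using hLip x y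
  filter_upwards [μ.support_mem_ae] with x hx f
  have hequi := (uniformEquicontinuous_birkhoffAverage ℝ hT
    (CompactSpace.uniformContinuous_of_continuous f.continuous)).equicontinuous
  have hball (k : ℕ) : μ (Metric.ball x (r k)) ≠ 0 :=
    ((Measure.mem_support_iff_forall x).1 hx _ (Metric.ball_mem_nhds x (hrpos k))).ne'
  have hint (k : ℕ) : IntegrableOn (birkhoffAverage ℝ T f k) (Metric.ball x (r k)) μ :=
    ((hequi.continuous k).integrable_of_hasCompactSupport (.of_compactSpace _)).integrableOn
  simpa [setAverage_eq, measureReal_def, birkhoffAverage, birkhoffSum] using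
    tendsto_setAverage_ball_of_equicontinuousAt (hequi x)
      (tendsto_birkhoffAverage_of_mem_support hT hErg f hx) hint hball hr0

/-- Spatial-temporal differentiation along shrinking balls for a 1-Lipschitz
homeomorphism: for almost every `x`, the averages of Birkhoff means of any
continuous `f` over the balls `B(x, r_k)` converge to `∫ f dμ`. -/
theorem nonexpansive_random_balls
    {X : Type*} [MetricSpace X] [CompactSpace X] [MeasurableSpace X] [BorelSpace X]
    (μ : Measure X) [IsProbabilityMeasure μ]
    (T : X ≃ₜ X) (hLip : ∀ x y : X, dist (T x) (T y) ≤ dist x y)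
    (hErg : Ergodic (⇑T) μ)
    (r : ℕ → ℝ) (hrpos : ∀ k, 0 < r k) (hrmono : Antitone r)
    (hr0 : Tendsto r atTop (𝓝 0)) :
    ∀ᵐ x ∂μ, ∀ f : C(X, ℝ),
      Tendsto (fun k : ℕ => (μ (Metric.ball x (r k))).toReal⁻¹ *
          ∫ y in Metric.ball x (r k), (k : ℝ)⁻¹ * ∑ i ∈ range k, f ((⇑T)^[i] y) ∂μ)
        atTop (𝓝 (∫ y, f y ∂μ)) :=
  nonexpansive_random_balls_general μ T hLip hErg r hrpos hr0
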